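/- Let Z be a complex q×q PSD matrix and W a real q×q positive definite matrix. Then ‖√W (Im Z) √W‖₁ ≤ tr(W · Re Z). Consequently tr(W Re Z) + ‖√W (Im Z) √W‖₁ ≤ 2 tr(W Re Z). -/

import Mathlib

open Matrix ComplexOrder

/-- The positive semidefinite square root of a positive semidefinite matrix
(the definition removed from Mathlib, restored with its old meaning). -/
noncomputable def Matrix.PosSemidef.sqrt {n : Type*} [Fintype n] [DecidableEq n] {𝕜 : Type*}
    [RCLike 𝕜] {A : Matrix n n 𝕜} (hA : A.PosSemidef) : Matrix n n 𝕜 :=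
  hA.1.eigenvectorUnitary.1 * diagonal ((↑) ∘ (√·) ∘ hA.1.eigenvalues) *
  (star hA.1.eigenvectorUnitary : Matrix n n 𝕜)

/-- The trace norm (sum of singular values) of a matrix over `𝕜 = ℝ` or `ℂ`. -/
noncomputable def traceNorm {n : Type*} [Fintype n] [DecidableEq n] {𝕜 : Type*} [RCLike 𝕜]
    (M : Matrix n n 𝕜) : ℝ :=
  RCLike.re (Matrix.trace (Matrix.posSemidef_conjTranspose_mul_self M).sqrt)

/-- The entrywise real part of a complex matrix. -/
def rePart {n : Type*} (A : Matrix n n ℂ) : Matrix n n ℝ := fun i j => (A i j).re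

/-- The entrywise imaginary part of a complex matrix. -/
def imPart {n : Type*} (A : Matrix n n ℂ) : Matrix n n ℝ := fun i j => (A i j).im

/-! With `S = √W`, the matrix `M = S Z S` is positive semidefinite, and so is its transpose,
which is its entrywise conjugate. Writing `M = A + iC` with `A = S (Re Z) S` and
`C = S (Im Z) S` real, both `A + iC` and `A - iC` are positive semidefinite and `iC` is
Hermitian. Evaluating both quadratic forms at a unit eigenvector `v` of `iC` with eigenvalue
`λ` gives `|λ| ≤ ⟪v, A v⟫`; summing over an orthonormal eigenbasis yields the
Belavkin–Grishanin bound `‖C‖₁ = ‖iC‖₁ = ∑ |λ| ≤ tr A = tr (W Re Z)`. -/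

open scoped MatrixOrder

namespace Matrix

section RCLike

variable {n 𝕜 : Type*} [Fintype n] [DecidableEq n] [RCLike 𝕜]

lemma PosSemidef.sqrt_eq_cfcSqrt {A : Matrix n n 𝕜} (hA : A.PosSemidef) :
    hA.sqrt = CFC.sqrt A := by
  rw [CFC.sqrt_eq_real_sqrt A hA.nonneg, cfcₙ_eq_cfc, hA.1.cfc_eq]
  simp [IsHermitian.cfc, PosSemidef.sqrt, Unitary.conjStarAlgAut_apply]

lemma traceNorm_eq_re_trace_abs (M : Matrix n n 𝕜) :
    traceNorm M = RCLike.re (trace (CFC.abs M)) := by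
  rw [traceNorm, PosSemidef.sqrt_eq_cfcSqrt, CFC.abs, star_eq_conjTranspose]

lemma traceNorm_smul (c : 𝕜) (M : Matrix n n 𝕜) :
    traceNorm (c • M) = ‖c‖ * traceNorm M := by
  rw [traceNorm_eq_re_trace_abs, traceNorm_eq_re_trace_abs, CFC.abs_smul, trace_smul,
    RCLike.smul_re]

lemma IsHermitian.traceNorm_eq_sum_abs_eigenvalues {H : Matrix n n 𝕜} (hH : H.IsHermitian) :
    traceNorm H = ∑ i, |hH.eigenvalues i| := by
  rw [traceNorm_eq_re_trace_abs, CFC.abs_eq_cfc_norm H hH.isSelfAdjoint, hH.cfc_eq,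
    IsHermitian.cfc, Unitary.conjStarAlgAut_apply, trace_mul_cycle, Unitary.coe_star_mul_self,
    one_mul, trace_diagonal, map_sum]
  simp

lemma trace_eq_sum_star_dotProduct_mulVec {ι : Type*} [Fintype ι] (A : Matrix n n 𝕜)
    (b : OrthonormalBasis ι 𝕜 (EuclideanSpace 𝕜 n)) :
    trace A = ∑ i, star (b i : n → 𝕜) ⬝ᵥ A *ᵥ b i := by
  have h : LinearMap.trace 𝕜 _ (toLpLin 2 2 A) = trace A := by
    rw [toLpLin_eq_toLin, LinearMap.trace_eq_matrix_trace _ (PiLp.basisFun 2 𝕜 n),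
      LinearMap.toMatrix_toLin]
  rw [← h, LinearMap.trace_eq_sum_inner _ b]
  simp [EuclideanSpace.inner_eq_star_dotProduct, dotProduct_comm]

omit [DecidableEq n] in
lemma abs_re_dotProduct_mulVec_le {A H : Matrix n n 𝕜} (h₁ : (A + H).PosSemidef)
    (h₂ : (A - H).PosSemidef) (v : n → 𝕜) :
    |RCLike.re (star v ⬝ᵥ H *ᵥ v)| ≤ RCLike.re (star v ⬝ᵥ A *ᵥ v) := by
  have e₁ := (RCLike.nonneg_iff.mp (h₁.dotProduct_mulVec_nonneg v)).1
  have e₂ := (RCLike.nonneg_iff.mp (h₂.dotProduct_mulVec_nonneg v)).1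
  simp only [add_mulVec, sub_mulVec, dotProduct_add, dotProduct_sub, map_add, map_sub] at e₁ e₂
  exact abs_le.mpr ⟨by linarith, by linarith⟩

theorem IsHermitian.traceNorm_le_re_trace {A H : Matrix n n 𝕜} (hH : H.IsHermitian)
    (h₁ : (A + H).PosSemidef) (h₂ : (A - H).PosSemidef) :
    traceNorm H ≤ RCLike.re (trace A) := by
  rw [hH.traceNorm_eq_sum_abs_eigenvalues,
    trace_eq_sum_star_dotProduct_mulVec A hH.eigenvectorBasis, map_sum]
  refine Finset.sum_le_sum fun i _ => ?_
  rw [hH.eigenvalues_eq i]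
  exact abs_re_dotProduct_mulVec_le h₁ h₂ _

end RCLike

section ofReal

variable {n : Type*}

lemma conjTranspose_map_ofReal (A : Matrix n n ℝ) :
    (A.map Complex.ofReal)ᴴ = Aᴴ.map Complex.ofReal :=
  (conjTranspose_map _ fun _ => by simp).symm

lemma map_ofReal_mul [Fintype n] (A B : Matrix n n ℝ) :
    (A * B).map Complex.ofReal = A.map Complex.ofReal * B.map Complex.ofReal :=
  Matrix.map_mul (f := Complex.ofRealHom)

variable [Fintype n] [DecidableEq n]

lemma PosSemidef.map_ofReal {P : Matrix n n ℝ} (hP : P.PosSemidef) :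
    (P.map Complex.ofReal).PosSemidef := by
  obtain ⟨B, rfl⟩ := CStarAlgebra.nonneg_iff_eq_star_mul_self.mp hP.nonneg
  rw [map_ofReal_mul, star_eq_conjTranspose, ← conjTranspose_map_ofReal]
  exact posSemidef_conjTranspose_mul_self _

lemma abs_map_ofReal (C : Matrix n n ℝ) :
    CFC.abs (C.map Complex.ofReal) = (CFC.abs C).map Complex.ofReal := by
  refine CFC.sqrt_unique ?_ (CFC.abs_nonneg C).posSemidef.map_ofReal.nonneg
  rw [← map_ofReal_mul, CFC.abs_mul_abs, map_ofReal_mul, star_eq_conjTranspose,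
    star_eq_conjTranspose, conjTranspose_map_ofReal]

lemma traceNorm_map_ofReal (C : Matrix n n ℝ) :
    traceNorm (C.map Complex.ofReal) = traceNorm C := by
  rw [traceNorm_eq_re_trace_abs, traceNorm_eq_re_trace_abs, abs_map_ofReal]
  simp [trace]

end ofReal

section rePart_imPart

variable {n : Type*}

lemma map_rePart_add_I_smul_map_imPart (M : Matrix n n ℂ) :
    (rePart M).map Complex.ofReal + Complex.I • (imPart M).map Complex.ofReal = M := by
  ext i j
  simp [rePart, imPart, Complex.ext_iff]

lemma IsHermitian.transpose_eq_map_rePart_sub_I_smul_map_imPart {M : Matrix n n ℂ}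
    (hM : M.IsHermitian) :
    Mᵀ = (rePart M).map Complex.ofReal - Complex.I • (imPart M).map Complex.ofReal := by
  ext i j
  simp [rePart, imPart, Complex.ext_iff, ← hM.apply i j]

lemma IsHermitian.isHermitian_I_smul_map_imPart {M : Matrix n n ℂ} (hM : M.IsHermitian) :
    (Complex.I • (imPart M).map Complex.ofReal).IsHermitian := by
  ext i j
  simp [imPart, ← hM.apply i j]

variable [Fintype n]

lemma rePart_map_ofReal_mul (S : Matrix n n ℝ) (Z : Matrix n n ℂ) :
    rePart (S.map Complex.ofReal * Z) = S * rePart Z := by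
  ext i j
  simp [rePart, mul_apply, Complex.re_sum]

lemma rePart_mul_map_ofReal (Z : Matrix n n ℂ) (S : Matrix n n ℝ) :
    rePart (Z * S.map Complex.ofReal) = rePart Z * S := by
  ext i j
  simp [rePart, mul_apply, Complex.re_sum]

lemma imPart_map_ofReal_mul (S : Matrix n n ℝ) (Z : Matrix n n ℂ) :
    imPart (S.map Complex.ofReal * Z) = S * imPart Z := by
  ext i j
  simp [imPart, mul_apply, Complex.im_sum]

lemma imPart_mul_map_ofReal (Z : Matrix n n ℂ) (S : Matrix n n ℝ) :
    imPart (Z * S.map Complex.ofReal) = imPart Z * S := by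
  ext i j
  simp [imPart, mul_apply, Complex.im_sum]

variable [DecidableEq n]

theorem PosSemidef.traceNorm_imPart_le_trace_rePart {M : Matrix n n ℂ} (hM : M.PosSemidef) :
    traceNorm (imPart M) ≤ trace (rePart M) := by
  have hbound := hM.1.isHermitian_I_smul_map_imPart.traceNorm_le_re_trace
    (A := (rePart M).map Complex.ofReal)
    (by rw [map_rePart_add_I_smul_map_imPart]; exact hM)
    (by rw [← hM.1.transpose_eq_map_rePart_sub_I_smul_map_imPart]; exact hM.transpose)
  rw [traceNorm_smul, Complex.norm_I, one_mul, traceNorm_map_ofReal] at hbound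
  simpa [trace] using hbound

end rePart_imPart

end Matrix

/-- For `Z ⪰ 0` complex and `W ≻ 0` real, `‖√W (Im Z) √W‖₁ ≤ tr(W Re Z)`, hence
`tr(W Re Z) + ‖√W (Im Z) √W‖₁ ≤ 2 tr(W Re Z)`. -/
theorem holevo_le_twice_helstrom_key {q : Type*} [Fintype q] [DecidableEq q]
    (Z : Matrix q q ℂ) (hZ : Z.PosSemidef) (W : Matrix q q ℝ) (hW : W.PosDef) :
    traceNorm (hW.posSemidef.sqrt * imPart Z * hW.posSemidef.sqrt)
        ≤ Matrix.trace (W * rePart Z) ∧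
    Matrix.trace (W * rePart Z) + traceNorm (hW.posSemidef.sqrt * imPart Z * hW.posSemidef.sqrt)
        ≤ 2 * Matrix.trace (W * rePart Z) := by
  rw [hW.posSemidef.sqrt_eq_cfcSqrt]
  set S := CFC.sqrt W
  have hS : S.IsHermitian := (CFC.sqrt_nonneg W).posSemidef.1
  have hM := hZ.mul_mul_conjTranspose_same (S.map Complex.ofReal)
  rw [conjTranspose_map_ofReal, hS.eq] at hM
  have hbound := hM.traceNorm_imPart_le_trace_rePart
  rw [imPart_mul_map_ofReal, imPart_map_ofReal_mul, rePart_mul_map_ofReal, rePart_map_ofReal_mul,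
    trace_mul_cycle, CFC.sqrt_mul_sqrt_self W hW.posSemidef.nonneg] at hbound
  exact ⟨hbound, by linarith⟩
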